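/- Let K random variables X_1,...,X_K and Z be such that the joint distribution of (X_1,...,X_K,Z) is invariant under permutations of the indices 1,...,K. Then for any nested subsets A ⊆ B ⊆ {1,...,K}, (1/|A|)·H(X_A | Z) ≥ (1/|B|)·H(X_B | Z). -/

import Mathlib

/-!
Submodularity of `A ↦ H(X_A | Z)` is the nonnegativity of conditional mutual information, which
follows from `log x ≤ x - 1`. By exchangeability this function depends only on `|A|`, and it
vanishes at `∅`. Submodularity then says that the increment gained by adding one more variable
to `T` is at most every earlier increment, so `H(X_T | Z) ≥ |T| · (H(X_{T ∪ {x}} | Z) - H(X_T | Z))`,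
which is exactly `H(X_{T ∪ {x}} | Z) / (|T| + 1) ≤ H(X_T | Z) / |T|`.
-/

open Finset
open scoped Classical BigOperators

noncomputable def distOf {Ω α : Type*} [Fintype Ω] (μ : Ω → ℝ) (X : Ω → α) (a : α) : ℝ :=
  ∑ ω, if X ω = a then μ ω else 0

noncomputable def ent {Ω α : Type*} [Fintype Ω] [Fintype α] (μ : Ω → ℝ) (X : Ω → α) : ℝ :=
  ∑ a, Real.negMulLog (distOf μ X a)

noncomputable def condEnt {Ω α γ : Type*} [Fintype Ω] [Fintype α] [Fintype γ]
    (μ : Ω → ℝ) (X : Ω → α) (Z : Ω → γ) : ℝ :=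
  ent μ (fun ω => (X ω, Z ω)) - ent μ Z

def restr {Ω ι α : Type*} (X : ι → Ω → α) (A : Finset ι) : Ω → (A → α) :=
  fun ω i => X i ω

section Entropy

variable {Ω α β γ : Type*} [Fintype Ω] (μ : Ω → ℝ)

lemma sum_distOf_mul [Fintype α] (X : Ω → α) (g : α → ℝ) :
    ∑ a, distOf μ X a * g a = ∑ ω, μ ω * g (X ω) := by
  simp only [distOf, Finset.sum_mul, ite_mul, zero_mul]
  rw [Finset.sum_comm]
  exact Finset.sum_congr rfl fun ω _ => by simp

lemma sum_distOf [Fintype α] (X : Ω → α) : ∑ a, distOf μ X a = ∑ ω, μ ω := by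
  simpa using sum_distOf_mul μ X fun _ => 1

lemma sum_distOf_prod_left [Fintype α] (X : Ω → α) (Y : Ω → β) (b : β) :
    ∑ a, distOf μ (fun ω => (X ω, Y ω)) (a, b) = distOf μ Y b := by
  simp only [distOf]
  rw [Finset.sum_comm]
  exact Finset.sum_congr rfl fun ω _ => by simp [Prod.ext_iff, ite_and]

lemma distOf_nonneg (hμ : ∀ ω, 0 ≤ μ ω) (X : Ω → α) (a : α) : 0 ≤ distOf μ X a :=
  Finset.sum_nonneg fun ω _ => ite_nonneg (hμ ω) le_rfl

lemma le_distOf_apply (hμ : ∀ ω, 0 ≤ μ ω) (X : Ω → α) (ω : Ω) : μ ω ≤ distOf μ X (X ω) := by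
  have h := Finset.single_le_sum (f := fun ω' => if X ω' = X ω then μ ω' else 0)
    (fun ω' _ => ite_nonneg (hμ ω') le_rfl) (Finset.mem_univ ω)
  unfold distOf
  simpa using h

lemma distOf_comp [Fintype α] (X : Ω → α) (f : α → β) (b : β) :
    distOf μ (fun ω => f (X ω)) b = ∑ a, distOf μ X a * if f a = b then 1 else 0 := by
  rw [sum_distOf_mul]
  simp [distOf]

lemma distOf_comp_of_injective (X : Ω → α) {f : α → β} (hf : f.Injective) (a : α) :
    distOf μ (fun ω => f (X ω)) (f a) = distOf μ X a := by
  simp [distOf, hf.eq_iff]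

lemma ent_eq_neg_sum [Fintype α] (X : Ω → α) :
    ent μ X = -∑ ω, μ ω * Real.log (distOf μ X (X ω)) := by
  rw [ent, ← sum_distOf_mul μ X fun a => Real.log (distOf μ X a), ← Finset.sum_neg_distrib]
  simp [Real.negMulLog]

lemma ent_comp_of_injective [Fintype α] [Fintype β] (X : Ω → α) {f : α → β}
    (hf : f.Injective) : ent μ (fun ω => f (X ω)) = ent μ X := by
  simp only [ent_eq_neg_sum, distOf_comp_of_injective μ X hf]

lemma ent_comp_congr [Fintype α] [Fintype β] {X Y : Ω → α} (h : distOf μ X = distOf μ Y)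
    (f : α → β) : ent μ (fun ω => f (X ω)) = ent μ (fun ω => f (Y ω)) := by
  simp only [ent, distOf_comp, h]

lemma sum_mul_div_eq_sum [Fintype α] [Fintype β] [Fintype γ]
    (q : α × γ → ℝ) (r : β × γ → ℝ) (s : γ → ℝ)
    (hq : ∀ w, ∑ u, q (u, w) = s w) (hr : ∀ w, ∑ v, r (v, w) = s w) :
    ∑ t : α × β × γ, q (t.1, t.2.2) * r (t.2.1, t.2.2) / s t.2.2 = ∑ w, s w := by
  have hw : ∀ w, ∑ u, ∑ v, q (u, w) * r (v, w) / s w = s w := fun w =>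
    calc ∑ u, ∑ v, q (u, w) * r (v, w) / s w = (∑ u, q (u, w)) * (∑ v, r (v, w)) / s w := by
          rw [Fintype.sum_mul_sum, Finset.sum_div]
          simp_rw [Finset.sum_div]
      _ = s w := by rw [hq, hr, mul_self_div_self]
  calc ∑ t : α × β × γ, q (t.1, t.2.2) * r (t.2.1, t.2.2) / s t.2.2
      = ∑ u, ∑ w, ∑ v, q (u, w) * r (v, w) / s w := by
        simp only [Fintype.sum_prod_type]
        exact Finset.sum_congr rfl fun u _ => Finset.sum_comm
    _ = ∑ w, s w := by rw [Finset.sum_comm]; exact Finset.sum_congr rfl fun w _ => hw w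

lemma ent_submodular (hμ : ∀ ω, 0 ≤ μ ω) [Fintype α] [Fintype β] [Fintype γ]
    (U : Ω → α) (V : Ω → β) (W : Ω → γ) :
    ent μ (fun ω => (U ω, V ω, W ω)) + ent μ W
      ≤ ent μ (fun ω => (U ω, W ω)) + ent μ (fun ω => (V ω, W ω)) := by
  set p := distOf μ fun ω => (U ω, V ω, W ω)
  set q := distOf μ fun ω => (U ω, W ω)
  set r := distOf μ fun ω => (V ω, W ω)
  set s := distOf μ W
  set g : α × β × γ → ℝ := fun t => q (t.1, t.2.2) * r (t.2.1, t.2.2) / (p t * s t.2.2)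
  -- Gibbs' inequality, pointwise: `log x ≤ x - 1` at `x = q r / (p s)`
  have hpoint : ∀ ω, μ ω * (Real.log (q (U ω, W ω)) + Real.log (r (V ω, W ω))
      - Real.log (p (U ω, V ω, W ω)) - Real.log (s (W ω)))
        ≤ μ ω * g (U ω, V ω, W ω) - μ ω := by
    intro ω
    rcases (hμ ω).eq_or_lt with h0 | hpos
    · simp [← h0]
    have hp := hpos.trans_le (le_distOf_apply μ hμ (fun ω => (U ω, V ω, W ω)) ω)
    have hq := hpos.trans_le (le_distOf_apply μ hμ (fun ω => (U ω, W ω)) ω)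
    have hr := hpos.trans_le (le_distOf_apply μ hμ (fun ω => (V ω, W ω)) ω)
    have hs := hpos.trans_le (le_distOf_apply μ hμ W ω)
    have hlog := Real.log_le_sub_one_of_pos (x := g (U ω, V ω, W ω)) (by positivity)
    rw [Real.log_div (by positivity) (by positivity), Real.log_mul hq.ne' hr.ne',
      Real.log_mul hp.ne' hs.ne'] at hlog
    nlinarith
  have hg : ∀ t, p t * g t ≤ q (t.1, t.2.2) * r (t.2.1, t.2.2) / s t.2.2 := by
    intro t
    by_cases hp : p t = 0
    · rw [hp, zero_mul]
      exact div_nonneg (mul_nonneg (distOf_nonneg μ hμ _ _) (distOf_nonneg μ hμ _ _))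
        (distOf_nonneg μ hμ _ _)
    · rw [mul_div_assoc', mul_div_mul_left _ _ hp]
  have hsum : ∑ ω, μ ω * g (U ω, V ω, W ω) ≤ ∑ ω, μ ω :=
    calc ∑ ω, μ ω * g (U ω, V ω, W ω) = ∑ t, p t * g t := (sum_distOf_mul μ _ g).symm
      _ ≤ ∑ t : α × β × γ, q (t.1, t.2.2) * r (t.2.1, t.2.2) / s t.2.2 :=
        Finset.sum_le_sum fun t _ => hg t
      _ = ∑ ω, μ ω := by
        rw [sum_mul_div_eq_sum q r s (sum_distOf_prod_left μ U W) (sum_distOf_prod_left μ V W),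
          sum_distOf]
  have hlogs := Finset.sum_le_sum fun ω (_ : ω ∈ Finset.univ) => hpoint ω
  simp only [mul_sub, mul_add, Finset.sum_sub_distrib, Finset.sum_add_distrib] at hlogs
  simp only [ent_eq_neg_sum]
  linarith

end Entropy

section CardinalitySubmodular

variable {ι : Type*} [DecidableEq ι] {φ : Finset ι → ℝ}

lemma card_mul_sub_le (h0 : φ ∅ = 0) (hcard : ∀ A B : Finset ι, #A = #B → φ A = φ B)
    (hsub : ∀ S x y, φ (insert x (insert y S)) + φ S ≤ φ (insert x S) + φ (insert y S))
    {T : Finset ι} {x : ι} (hx : x ∉ T) : #T * (φ (insert x T) - φ T) ≤ φ T := by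
  induction T using Finset.induction_on generalizing x with
  | empty => simp [h0]
  | insert y T hy ih =>
    have hxT : x ∉ T := fun h => hx (mem_insert_of_mem h)
    have hdec := hsub T x y
    have hswap : φ (insert x T) = φ (insert y T) := hcard _ _ (by simp [hxT, hy])
    have hT := ih hxT
    rw [card_insert_of_notMem hy, Nat.cast_succ]
    nlinarith [(Nat.cast_nonneg #T : (0 : ℝ) ≤ #T)]

lemma div_card_le_div_card_of_subset (h0 : φ ∅ = 0)
    (hcard : ∀ A B : Finset ι, #A = #B → φ A = φ B)
    (hsub : ∀ S x y, φ (insert x (insert y S)) + φ S ≤ φ (insert x S) + φ (insert y S))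
    {A B : Finset ι} (hA : A.Nonempty) (hAB : A ⊆ B) : φ B / #B ≤ φ A / #A := by
  obtain ⟨D, rfl, hD⟩ : ∃ D, B = A ∪ D ∧ Disjoint A D :=
    ⟨B \ A, (union_sdiff_of_subset hAB).symm, disjoint_sdiff⟩
  clear hAB
  induction D using Finset.induction_on with
  | empty => simp
  | insert x D hx ih =>
    have hxA : x ∉ A ∪ D := by simp [hx, disjoint_insert_right.1 hD |>.1]
    have hpos : (0 : ℝ) < #(A ∪ D) := by exact_mod_cast (hA.mono subset_union_left).card_pos
    have hstep := card_mul_sub_le h0 hcard hsub hxA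
    rw [union_insert, card_insert_of_notMem hxA, Nat.cast_succ]
    refine le_trans ?_ (ih (disjoint_of_subset_right (subset_insert x D) hD))
    rw [div_le_div_iff₀ (by positivity) hpos]
    linarith

end CardinalitySubmodular

section Restriction

lemma injective_restrict_insert {ι α β : Type*} [DecidableEq ι] (x : ι) (T : Finset ι) :
    Function.Injective fun p : (↥(insert x T) → α) × β =>
      (p.1 ⟨x, mem_insert_self x T⟩, (fun i : ↥T => p.1 ⟨i, mem_insert_of_mem i.2⟩), p.2) := by
  rintro ⟨v, w⟩ ⟨v', w'⟩ h
  simp only [Prod.mk.injEq, funext_iff] at h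
  obtain ⟨hx, hT, rfl⟩ := h
  refine Prod.ext (funext fun ⟨i, hi⟩ => ?_) rfl
  rcases mem_insert.1 hi with rfl | hi
  · exact hx
  · exact hT ⟨i, hi⟩

variable {Ω ι α β γ : Type*} [Fintype Ω] [Fintype α] [Fintype β] [Fintype γ] [DecidableEq ι]
  (μ : Ω → ℝ) (X : ι → Ω → α) (Z : Ω → γ)

lemma ent_restr_insert (x : ι) (T : Finset ι) (W : Ω → β) :
    ent μ (fun ω => (X x ω, restr X T ω, W ω)) = ent μ (fun ω => (restr X (insert x T) ω, W ω)) :=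
  ent_comp_of_injective μ (fun ω => (restr X (insert x T) ω, W ω))
    (injective_restrict_insert x T)

lemma condEnt_restr_empty : condEnt μ (restr X ∅) Z = 0 := by
  have h : Function.Injective (Prod.snd : (↥(∅ : Finset ι) → α) × γ → γ) :=
    fun p p' hp => Prod.ext (Subsingleton.elim _ _) hp
  exact sub_eq_zero.2 (ent_comp_of_injective μ (fun ω => (restr X ∅ ω, Z ω)) h).symm

lemma condEnt_restr_submodular (hμ : ∀ ω, 0 ≤ μ ω) (S : Finset ι) (x y : ι) :
    condEnt μ (restr X (insert x (insert y S))) Z + condEnt μ (restr X S) Z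
      ≤ condEnt μ (restr X (insert x S)) Z + condEnt μ (restr X (insert y S)) Z := by
  have h := ent_submodular μ hμ (X x) (X y) fun ω => (restr X S ω, Z ω)
  have hxy : ent μ (fun ω => (X x ω, X y ω, restr X S ω, Z ω))
      = ent μ (fun ω => (restr X (insert x (insert y S)) ω, Z ω)) := by
    rw [← ent_restr_insert]
    exact ent_comp_of_injective μ (fun ω => (X x ω, restr X (insert y S) ω, Z ω))
      (Function.injective_id.prodMap (injective_restrict_insert y S))
  rw [hxy, ent_restr_insert, ent_restr_insert] at h
  simp only [condEnt]
  linarith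

lemma condEnt_restr_eq_of_card_eq [Fintype ι]
    (hperm : ∀ π : Equiv.Perm ι, distOf μ (fun ω => ((fun i => X (π i) ω), Z ω))
      = distOf μ (fun ω => ((fun i => X i ω), Z ω)))
    {A B : Finset ι} (h : #A = #B) : condEnt μ (restr X A) Z = condEnt μ (restr X B) Z := by
  let e : A ≃ B := Finset.equivOfCardEq h
  have he : ∀ i : A, e.extendSubtype i = e i := fun i => e.extendSubtype_apply_of_mem i i.2
  have hAB : ent μ (fun ω => (restr X A ω, Z ω))
      = ent μ (fun ω => ((fun i : A => restr X B ω (e i)), Z ω)) := by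
    calc ent μ (fun ω => (restr X A ω, Z ω))
        = ent μ (fun ω => ((fun i : A => X (e.extendSubtype i) ω), Z ω)) :=
          ent_comp_congr μ (hperm e.extendSubtype).symm fun p => (fun i : A => p.1 i, p.2)
      _ = ent μ (fun ω => ((fun i : A => restr X B ω (e i)), Z ω)) := by simp only [he]; rfl
  rw [condEnt, condEnt, hAB]
  congr 1
  exact ent_comp_of_injective μ (fun ω => (restr X B ω, Z ω))
    (e.surjective.injective_comp_right.prodMap Function.injective_id)

end Restriction

theorem stmt1_general {Ω α γ : Type*} [Fintype Ω] [Fintype α] [Fintype γ] {K : ℕ}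
    (μ : Ω → ℝ) (hμ0 : ∀ ω, 0 ≤ μ ω)
    (X : Fin K → Ω → α) (Z : Ω → γ)
    (hperm : ∀ (π : Equiv.Perm (Fin K)) (v : Fin K → α) (z : γ),
      distOf μ (fun ω => ((fun i => X (π i) ω), Z ω)) (v, z)
        = distOf μ (fun ω => ((fun i => X i ω), Z ω)) (v, z))
    (A B : Finset (Fin K)) (hA : A.Nonempty) (hAB : A ⊆ B) :
    (1 / (B.card : ℝ)) * condEnt μ (restr X B) Z
      ≤ (1 / (A.card : ℝ)) * condEnt μ (restr X A) Z := by
  simp only [one_div_mul_eq_div]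
  exact div_card_le_div_card_of_subset (condEnt_restr_empty μ X Z)
    (fun _ _ => condEnt_restr_eq_of_card_eq μ X Z fun π => funext fun ⟨v, z⟩ => hperm π v z)
    (condEnt_restr_submodular μ X Z hμ0) hA hAB

theorem stmt1 {Ω α γ : Type*} [Fintype Ω] [Fintype α] [Fintype γ] {K : ℕ}
    (μ : Ω → ℝ) (hμ0 : ∀ ω, 0 ≤ μ ω) (hμ1 : ∑ ω, μ ω = 1)
    (X : Fin K → Ω → α) (Z : Ω → γ)
    (hperm : ∀ (π : Equiv.Perm (Fin K)) (v : Fin K → α) (z : γ),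
      distOf μ (fun ω => ((fun i => X (π i) ω), Z ω)) (v, z)
        = distOf μ (fun ω => ((fun i => X i ω), Z ω)) (v, z))
    (A B : Finset (Fin K)) (hA : A.Nonempty) (hAB : A ⊆ B) :
    (1 / (B.card : ℝ)) * condEnt μ (restr X B) Z
      ≤ (1 / (A.card : ℝ)) * condEnt μ (restr X A) Z :=
  stmt1_general μ hμ0 X Z hperm A B hA hAB
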